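/- The meaning of a shape predicate is closed under structural equivalence: if P matches shape predicate S (written P : S) and P ≡ Q, then Q : S. -/
import Mathlib


/-- Basic names of MetaStar. -/
abbrev BasicName := String
/-- A MetaStar name is a pair of a basic name and a natural number. -/
abbrev MName := BasicName × ℕ

/-- MetaStar messages: forms, the empty message, and composition. -/
inductive MMessage where
  | form : List MName → MMessage
  | eps  : MMessage
  | comp : MMessage → MMessage → MMessage

/-- MetaStar action elements: names, input binders, and outputs. -/
inductive MElement where
  | name : MName → MElement
  | inp  : List MName → MElement
  | out  : List MMessage → MElement

/-- Actions are sequences of elements. -/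
abbrev MAction := List MElement

/-- MetaStar processes. -/
inductive MProc where
  | nil  : MProc
  | act  : MAction → MProc → MProc
  | par  : MProc → MProc → MProc
  | nu   : MName → MProc → MProc
  | bang : MProc → MProc
def fnMsg : MMessage → Set MName
  | .form F => {x | x ∈ F}
  | .eps => ∅
  | .comp M N => fnMsg M ∪ fnMsg N

def fnElem : MElement → Set MName
  | .name x => {x}
  | .inp _ => ∅
  | .out Ms => {x | ∃ M ∈ Ms, x ∈ fnMsg M}

def bnElem : MElement → Set MName
  | .inp xs => {x | x ∈ xs}
  | _ => ∅

/-- Free names of an action. -/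
def fnAct (A : MAction) : Set MName := {x | ∃ E ∈ A, x ∈ fnElem E}
/-- (Input-)bound names of an action. -/
def bnAct (A : MAction) : Set MName := {x | ∃ E ∈ A, x ∈ bnElem E}

/-- Free names of a process. -/
def fnProc : MProc → Set MName
  | .nil => ∅
  | .act A P => fnAct A ∪ (fnProc P \ bnAct A)
  | .par P Q => fnProc P ∪ fnProc Q
  | .nu x P => fnProc P \ {x}
  | .bang P => fnProc P
/-- MetaStar structural equivalence: the least congruence generated by the
standard axioms, including scope extrusion and commuting ν past actions. -/
inductive StrEq : MProc → MProc → Prop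
  | par_comm    : StrEq (.par P Q) (.par Q P)
  | par_assoc   : StrEq (.par P (.par Q R)) (.par (.par P Q) R)
  | par_nil     : StrEq (.par P .nil) P
  | nil_bang    : StrEq .nil (.bang .nil)
  | bang_unfold : StrEq (.bang P) (.par P (.bang P))
  | nu_swap     : StrEq (.nu x (.nu y P)) (.nu y (.nu x P))
  | act_nu      : x ∉ fnAct A ∪ bnAct A → StrEq (.act A (.nu x P)) (.nu x (.act A P))
  | scope       : x ∉ fnProc P → StrEq (.par P (.nu x Q)) (.nu x (.par P Q))
  | refl        : StrEq P P
  | symm        : StrEq P Q → StrEq Q P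
  | trans       : StrEq P Q → StrEq Q R → StrEq P R
  | act_cong    : StrEq P Q → StrEq (.act A P) (.act A Q)
  | par_cong    : StrEq P P' → StrEq Q Q' → StrEq (.par P Q) (.par P' Q')
  | nu_cong     : StrEq P Q → StrEq (.nu x P) (.nu x Q)
  | bang_cong   : StrEq P Q → StrEq (.bang P) (.bang Q)
/-- A form type is a sequence of basic names. -/
abbrev FormType := List BasicName

inductive MessageType where
  | star  : Finset FormType → MessageType
  | basic : BasicName → MessageType

inductive ElementType where
  | name : BasicName → ElementType
  | inp  : List BasicName → ElementType
  | out  : List MessageType → ElementType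

abbrev ActionType := List ElementType
abbrev Node := ℕ
/-- A shape graph: a finite set of edges labeled by action types. -/
abbrev ShapeGraph := Finset (Node × ActionType × Node)

/-- Matching a message against a finite set of form types. -/
def matchMsgSet : MMessage → Finset FormType → Prop
  | .form F, FS => ∃ FT ∈ FS, F.map Prod.fst = FT
  | .eps, _ => True
  | .comp M N, FS => matchMsgSet M FS ∧ matchMsgSet N FS

def isSingleName : MMessage → Prop
  | .form [_] => True
  | _ => False

def matchMsgType : MMessage → MessageType → Prop
  | M, .basic a => ∃ i, M = .form [(a, i)]
  | M, .star FS => ¬ isSingleName M ∧ matchMsgSet M FS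

def matchElem : MElement → ElementType → Prop
  | .name x, .name a => x.1 = a
  | .inp xs, .inp as => xs.map Prod.fst = as
  | .out Ms, .out MTs => List.Forall₂ matchMsgType Ms MTs
  | _, _ => False

def matchAction (A : MAction) (AT : ActionType) : Prop :=
  List.Forall₂ matchElem A AT

/-- Matching a process against a shape predicate `⟨G, X⟩`. -/
inductive MatchP (G : ShapeGraph) : MProc → Node → Prop
  | nil  : MatchP G .nil X
  | par  : MatchP G P X → MatchP G Q X → MatchP G (.par P Q) X
  | nu   : MatchP G P X → MatchP G (.nu x P) X
  | bang : MatchP G P X → MatchP G (.bang P) X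
  | act  : (X₀, AT, X₁) ∈ G → matchAction A AT → MatchP G P X₁ →
      MatchP G (.act A P) X₀


theorem matchP_streq_iff {G : ShapeGraph} {P Q : MProc}
    (h : StrEq P Q) : ∀ X, MatchP G P X ↔ MatchP G Q X := by
  induction h with
  | par_comm => intro X; constructor <;> (rintro (_|⟨hP,hQ⟩); exact .par hQ hP)
  | par_assoc =>
      intro X; constructor
      · rintro (_|⟨hP, _|⟨hQ,hR⟩⟩); exact .par (.par hP hQ) hR
      · rintro (_|⟨_|⟨hP,hQ⟩, hR⟩); exact .par hP (.par hQ hR)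
  | par_nil =>
      intro X; constructor
      · rintro (_|⟨hP,_⟩); exact hP
      · intro h; exact .par h .nil
  | nil_bang =>
      intro X; constructor
      · intro _; exact .bang .nil
      · intro _; exact .nil
  | bang_unfold =>
      intro X; constructor
      · rintro (_|_|_|h); exact .par h (.bang h)
      · rintro (_|⟨_,h⟩); exact h
  | nu_swap => intro X; constructor <;> (rintro (_|_|⟨_|_|h⟩); exact .nu (.nu h))
  | act_nu _ =>
      intro X; constructor
      · rintro (_|_|_|_|⟨hG,hA,_|_|h⟩); exact .nu (.act hG hA h)
      · rintro (_|_|⟨_|_|_|_|⟨hG,hA,h⟩⟩); exact .act hG hA (.nu h)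
  | scope _ =>
      intro X; constructor
      · rintro (_|⟨hP,_|_|hQ⟩); exact .nu (.par hP hQ)
      · rintro (_|_|⟨_|⟨hP,hQ⟩⟩); exact .par hP (.nu hQ)
  | refl => intro X; rfl
  | symm _ ih => intro X; exact (ih X).symm
  | trans _ _ ih1 ih2 => intro X; exact (ih1 X).trans (ih2 X)
  | act_cong _ ih =>
      intro X; constructor
      · rintro (_|_|_|_|⟨hG,hA,h⟩); exact .act hG hA ((ih _).1 h)
      · rintro (_|_|_|_|⟨hG,hA,h⟩); exact .act hG hA ((ih _).2 h)
  | par_cong _ _ ih1 ih2 =>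
      intro X; constructor
      · rintro (_|⟨hP,hQ⟩); exact .par ((ih1 X).1 hP) ((ih2 X).1 hQ)
      · rintro (_|⟨hP,hQ⟩); exact .par ((ih1 X).2 hP) ((ih2 X).2 hQ)
  | nu_cong _ ih =>
      intro X; constructor
      · rintro (_|_|h); exact .nu ((ih X).1 h)
      · rintro (_|_|h); exact .nu ((ih X).2 h)
  | bang_cong _ ih =>
      intro X; constructor
      · rintro (_|_|_|h); exact .bang ((ih X).1 h)
      · rintro (_|_|_|h); exact .bang ((ih X).2 h)

/-- The meaning of a shape predicate is closed under structural equivalence. -/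
theorem matchP_streq {G : ShapeGraph} {X : Node} {P Q : MProc}
    (h1 : MatchP G P X) (h2 : StrEq P Q) : MatchP G Q X := (matchP_streq_iff h2 X).1 h1
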